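/- Let ||·|| be a unitarily invariant norm on n×n complex matrices normalized so that ||E_11|| = 1, and suppose ||E_11 + ... + E_kk|| = k for some k ≤ n. Then for every n×n matrix B of rank at most k, ||B|| equals the trace norm of B (the sum of its singular values). -/

import Mathlib

open Matrix ComplexOrder

/-- The trace norm of a square complex matrix: `tr ((Bᴴ B)^{1/2})`, i.e. the
sum of the singular values of `B`. -/
noncomputable def traceNorm {n : ℕ} (B : Matrix (Fin n) (Fin n) ℂ) : ℝ :=
  (((Matrix.posSemidef_conjTranspose_mul_self B).1.eigenvectorUnitary : Matrix (Fin n) (Fin n) ℂ) *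
    Matrix.diagonal (((↑) : ℝ → ℂ) ∘ Real.sqrt ∘ (Matrix.posSemidef_conjTranspose_mul_self B).1.eigenvalues) *
    (star (Matrix.posSemidef_conjTranspose_mul_self B).1.eigenvectorUnitary : Matrix (Fin n) (Fin n) ℂ)).trace.re

/-- The partial identity `E₁₁ + ⋯ + E_kk` in `M_n(ℂ)`. -/
def partialId (n k : ℕ) : Matrix (Fin n) (Fin n) ℂ :=
  Matrix.of fun i j => if i = j ∧ (i : ℕ) < k then 1 else 0

/-!
Write `B = U Σ W*` with `U`, `W` unitary and `Σ = diag σ`, `σᵢ ≥ 0` (singular value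
decomposition); then `N B = N Σ` and `traceNorm B = ∑ σᵢ`. Conjugating by permutation matrices
shows that `N (diag d)` is symmetric in the entries of `d`, so every `E_ii` has norm `1` and the
triangle inequality gives `N Σ ≤ ∑ σᵢ`. Conversely, `rank B ≤ k` leaves at most `k` nonzero `σᵢ`,
which a permutation moves to the first `k` places. The `k` cyclic shifts of these places carry `σ`
to diagonals summing to `(∑ σᵢ) • (E₁₁ + ⋯ + E_kk)`, whence `k ∑ σᵢ ≤ k N Σ`.
-/

namespace Matrix

variable {ι R : Type*} [DecidableEq ι] [Fintype ι]

lemma permMatrix_mul_diagonal_mul_permMatrix_inv [NonAssocSemiring R] (τ : Equiv.Perm ι)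
    (d : ι → R) : τ.permMatrix R * diagonal d * (τ⁻¹).permMatrix R = diagonal (d ∘ τ) := by
  rw [PEquiv.toMatrix_toPEquiv_mul, PEquiv.mul_toMatrix_toPEquiv, submatrix_submatrix,
    Equiv.Perm.inv_def, Equiv.symm_symm]
  exact submatrix_diagonal_equiv d τ

lemma permMatrix_mem_unitaryGroup [CommRing R] [StarRing R] (τ : Equiv.Perm ι) :
    τ.permMatrix R ∈ unitaryGroup ι R := by
  rw [mem_unitaryGroup_iff, star_eq_conjTranspose, conjTranspose_permMatrix, ← permMatrix_mul,
    inv_mul_cancel, permMatrix_one]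

lemma diagonal_eq_sum_single [AddCommMonoid R] (d : ι → R) :
    diagonal d = ∑ i, single i i (d i) :=
  calc diagonal d = diagonal (∑ i, Pi.single i (d i)) := by rw [Finset.univ_sum_single]
    _ = ∑ i, diagonal (Pi.single i (d i)) := map_sum (diagonalAddMonoidHom ι R) _ _
    _ = ∑ i, single i i (d i) := by simp_rw [diagonal_single]

lemma IsHermitian.star_eigenvectorUnitary_mul_mul_eigenvectorUnitary {𝕜 : Type*} [RCLike 𝕜]
    {A : Matrix ι ι 𝕜} (hA : A.IsHermitian) :
    (star hA.eigenvectorUnitary : Matrix ι ι 𝕜) * A * (hA.eigenvectorUnitary : Matrix ι ι 𝕜) =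
      diagonal (RCLike.ofReal ∘ hA.eigenvalues) := by
  simpa using hA.conjStarAlgAut_star_eigenvectorUnitary

end Matrix

namespace Fin

variable {k n : ℕ}

lemma exists_perm_comp_eq_zero_of_card_le {M : Type*} [Zero M] [DecidableEq M] (hk : k ≤ n)
    (d : Fin n → M) (hd : Fintype.card {i // d i ≠ 0} ≤ k) :
    ∃ τ : Equiv.Perm (Fin n), ∀ i : Fin n, k ≤ i → d (τ i) = 0 := by
  set S := Finset.univ.filter fun i => d i ≠ 0
  set T := Finset.univ.map (Fin.castLEEmb hk)
  obtain ⟨U, hSU, -, hU⟩ := Finset.exists_subsuperset_card_eq (n := k) (Finset.subset_univ S)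
    (by rwa [← Fintype.card_subtype]) (by simpa using hk)
  obtain ⟨τ, hτ⟩ := Equiv.Perm.exists_map_finset_eq T U (by simp [T, hU])
  refine ⟨τ, fun i hi => not_not.mp fun hdi => ?_⟩
  have hτi : τ i ∈ T.map τ.toEmbedding :=
    hτ ▸ hSU (Finset.mem_filter.mpr ⟨Finset.mem_univ _, hdi⟩)
  obtain ⟨a, haT, ha⟩ := Finset.mem_map.mp hτi
  obtain ⟨b, -, rfl⟩ := Finset.mem_map.mp (τ.injective ha ▸ haT)
  simp at hi
  omega

variable [NeZero k]

def initialShift (hk : k ≤ n) (j : Fin k) : Equiv.Perm (Fin n) :=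
  (Equiv.addRight j).extendDomain (Fin.castLEquiv hk)

lemma initialShift_apply_of_lt (hk : k ≤ n) (j : Fin k) {i : Fin n} (hi : (i : ℕ) < k) :
    initialShift hk j i = Fin.castLEquiv hk ((Fin.castLEquiv hk).symm ⟨i, hi⟩ + j) :=
  Equiv.Perm.extendDomain_apply_subtype (Equiv.addRight j) (Fin.castLEquiv hk) (b := i) hi

lemma initialShift_apply_of_le (hk : k ≤ n) (j : Fin k) {i : Fin n} (hi : k ≤ (i : ℕ)) :
    initialShift hk j i = i :=
  Equiv.Perm.extendDomain_apply_not_subtype (Equiv.addRight j) (Fin.castLEquiv hk) (b := i)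
    (not_lt.mpr hi)

lemma sum_comp_initialShift (hk : k ≤ n) {M : Type*} [AddCommMonoid M] (d : Fin n → M)
    (hd : ∀ i : Fin n, k ≤ i → d i = 0) (i : Fin n) :
    ∑ j : Fin k, d (initialShift hk j i) = if (i : ℕ) < k then ∑ i, d i else 0 := by
  split_ifs with hi
  · have hsum : ∑ i, d i = ∑ a : Fin k, d (Fin.castLEquiv hk a) := by
      rw [← Fintype.sum_subtype_add_sum_subtype (fun i : Fin n => (i : ℕ) < k),
        Fintype.sum_eq_zero (fun i : {i : Fin n // ¬ (i : ℕ) < k} => d i)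
          fun i => hd i (not_lt.mp i.2), add_zero]
      exact ((Fin.castLEquiv hk).sum_comp fun i => d i).symm
    simp_rw [initialShift_apply_of_lt hk _ hi, hsum]
    exact Equiv.sum_comp (Equiv.addLeft _) fun a => d (Fin.castLEquiv hk a)
  · simp_rw [initialShift_apply_of_le hk _ (not_lt.mp hi), hd i (not_lt.mp hi),
      Finset.sum_const_zero]

end Fin

lemma partialId_eq_diagonal (n k : ℕ) :
    partialId n k = diagonal fun i : Fin n => if (i : ℕ) < k then 1 else 0 := by
  ext i j
  by_cases h : i = j <;> simp [partialId, h]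

lemma sum_diagonal_comp_initialShift {k n : ℕ} [NeZero k] (hk : k ≤ n) (d : Fin n → ℂ)
    (hd : ∀ i : Fin n, k ≤ i → d i = 0) :
    ∑ j : Fin k, diagonal (d ∘ Fin.initialShift hk j) = (∑ i, d i) • partialId n k := by
  rw [partialId_eq_diagonal, ← diagonal_smul]
  ext a b
  rw [Matrix.sum_apply]
  by_cases hab : a = b
  · subst hab
    simp [Fin.sum_comp_initialShift hk d hd]
  · simp [hab]

lemma Seminorm.apply_sum_le {𝕜 E ι : Type*} [SeminormedRing 𝕜] [AddCommGroup E] [Module 𝕜 E]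
    (p : Seminorm 𝕜 E) (s : Finset ι) (f : ι → E) : p (∑ i ∈ s, f i) ≤ ∑ i ∈ s, p (f i) :=
  Finset.le_sum_of_subadditive p (map_zero p).le (map_add_le_add p) s f

namespace Seminorm

variable {n : ℕ} (p : Seminorm ℂ (Matrix (Fin n) (Fin n) ℂ))

lemma apply_diagonal_le_sum_norm (hE : ∀ i, p (single i i 1) ≤ 1) (d : Fin n → ℂ) :
    p (diagonal d) ≤ ∑ i, ‖d i‖ :=
  calc p (diagonal d) ≤ ∑ i, p (d i • single i i 1) := by
        simpa only [diagonal_eq_sum_single, smul_single, smul_eq_mul, mul_one] using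
          p.apply_sum_le Finset.univ fun i => d i • single i i (1 : ℂ)
    _ = ∑ i, ‖d i‖ * p (single i i 1) := by simp_rw [map_smul_eq_mul]
    _ ≤ ∑ i, ‖d i‖ := Finset.sum_le_sum fun i _ => mul_le_of_le_one_right (norm_nonneg _) (hE i)

lemma apply_single_one_eq_of_perm
    (hperm : ∀ (τ : Equiv.Perm (Fin n)) (d : Fin n → ℂ), p (diagonal (d ∘ τ)) = p (diagonal d))
    (i j : Fin n) : p (single i i 1) = p (single j j 1) := by
  have hswap : Pi.single j (1 : ℂ) ∘ Equiv.swap i j = Pi.single i 1 := by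
    ext x
    simp [Pi.single_apply, Equiv.swap_apply_eq_iff]
  rw [← diagonal_single, ← diagonal_single, ← hswap, hperm]

lemma norm_sum_le_apply_diagonal
    (hperm : ∀ (τ : Equiv.Perm (Fin n)) (d : Fin n → ℂ), p (diagonal (d ∘ τ)) = p (diagonal d))
    {k : ℕ} (hk : k ≤ n) (hPk : p (partialId n k) = k) (d : Fin n → ℂ)
    (hd : ∀ i : Fin n, k ≤ i → d i = 0) : ‖∑ i, d i‖ ≤ p (diagonal d) := by
  obtain rfl | hk0 := Nat.eq_zero_or_pos k
  · simp [hd _ (Nat.zero_le _)]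
  have : NeZero k := ⟨hk0.ne'⟩
  have hscaled : k * ‖∑ i, d i‖ ≤ k * p (diagonal d) :=
    calc k * ‖∑ i, d i‖ = p ((∑ i, d i) • partialId n k) := by
          rw [map_smul_eq_mul, hPk, mul_comm]
      _ = p (∑ j : Fin k, diagonal (d ∘ Fin.initialShift hk j)) := by
          rw [sum_diagonal_comp_initialShift hk d hd]
      _ ≤ ∑ j : Fin k, p (diagonal (d ∘ Fin.initialShift hk j)) := p.apply_sum_le _ _
      _ = k * p (diagonal d) := by simp [hperm]
  exact le_of_mul_le_mul_left hscaled (by positivity)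

lemma apply_diagonal_ofReal_eq_sum
    (hperm : ∀ (τ : Equiv.Perm (Fin n)) (d : Fin n → ℂ), p (diagonal (d ∘ τ)) = p (diagonal d))
    (hE : ∀ i, p (single i i 1) = 1) {k : ℕ} (hk : k ≤ n) (hPk : p (partialId n k) = k)
    (σ : Fin n → ℝ) (hσ : ∀ i, 0 ≤ σ i) (hσk : Fintype.card {i // (σ i : ℂ) ≠ 0} ≤ k) :
    p (diagonal fun i => (σ i : ℂ)) = ∑ i, σ i := by
  obtain ⟨τ, hτ⟩ := Fin.exists_perm_comp_eq_zero_of_card_le hk _ hσk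
  refine le_antisymm ?_ ?_
  · simpa [Real.norm_of_nonneg (hσ _)] using
      p.apply_diagonal_le_sum_norm (fun i => (hE i).le) fun i => (σ i : ℂ)
  · have := p.norm_sum_le_apply_diagonal hperm hk hPk (fun i => (σ (τ i) : ℂ)) hτ
    rw [← Complex.ofReal_sum, Complex.norm_real, Equiv.sum_comp τ σ,
      Real.norm_of_nonneg (Finset.sum_nonneg fun i _ => hσ i)] at this
    exact this.trans_eq (hperm τ fun i => (σ i : ℂ))

end Seminorm

namespace Matrix

variable {ι : Type*} [Fintype ι]

open scoped InnerProductSpace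

lemma inner_toLp_transpose (C : Matrix ι ι ℂ) (a b : ι) :
    ⟪WithLp.toLp 2 (Cᵀ a), WithLp.toLp 2 (Cᵀ b)⟫_ℂ = (Cᴴ * C) a b := by
  simp [EuclideanSpace.inner_eq_star_dotProduct, dotProduct, mul_apply, mul_comm]

/-- The nonzero columns of `C` are orthogonal with norms `|σ j|`; normalized and completed to an
orthonormal basis they form the columns of `U`. -/
lemma exists_unitary_eq_mul_diagonal_of_conjTranspose_mul_self [DecidableEq ι]
    (C : Matrix ι ι ℂ) (σ : ι → ℝ) (hC : Cᴴ * C = diagonal fun i => ((σ i ^ 2 : ℝ) : ℂ)) :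
    ∃ U ∈ unitaryGroup ι ℂ, C = U * diagonal fun i => (σ i : ℂ) := by
  let col : ι → EuclideanSpace ℂ ι := fun j => WithLp.toLp 2 (Cᵀ j)
  have hcol : ∀ a b, ⟪col a, col b⟫_ℂ = if a = b then ((σ a ^ 2 : ℝ) : ℂ) else 0 := by
    intro a b
    rw [inner_toLp_transpose, hC, diagonal_apply]
  let v : ι → EuclideanSpace ℂ ι := fun j => (σ j : ℂ)⁻¹ • col j
  have hv : Orthonormal ℂ ({j | σ j ≠ 0}.domRestrict v) := by
    rw [orthonormal_iff_ite]
    rintro ⟨a, ha⟩ ⟨b, hb⟩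
    simp only [Set.domRestrict_apply, v, inner_smul_left, inner_smul_right, hcol,
      Subtype.mk.injEq, map_inv₀, Complex.conj_ofReal]
    split_ifs with hab
    · subst hab
      have : (σ a : ℂ) ≠ 0 := by exact_mod_cast ha
      push_cast
      field_simp
    · simp
  obtain ⟨b, hb⟩ := hv.exists_orthonormalBasis_extension_of_card_eq (by simp)
  refine ⟨(EuclideanSpace.basisFun ι ℂ).toBasis.toMatrix b,
    OrthonormalBasis.toMatrix_orthonormalBasis_mem_unitary _ _, ?_⟩
  ext i j
  rw [mul_diagonal, Module.Basis.toMatrix_apply]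
  by_cases hj : σ j = 0
  · have : col j = 0 := inner_self_eq_zero.mp (by rw [hcol, if_pos rfl, hj]; simp)
    simpa [hj, col] using congrArg (· i) this
  · rw [hb j hj]
    have : (σ j : ℂ) ≠ 0 := by exact_mod_cast hj
    simp [v, col]
    field_simp

lemma exists_unitary_mul_eigenvectorUnitary_eq_mul_diagonal [DecidableEq ι]
    (B : Matrix ι ι ℂ) :
    ∃ U ∈ unitaryGroup ι ℂ,
      B * ((posSemidef_conjTranspose_mul_self B).1.eigenvectorUnitary : Matrix ι ι ℂ) =
        U * diagonal fun i => (√((posSemidef_conjTranspose_mul_self B).1.eigenvalues i) : ℂ) := by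
  set H := (posSemidef_conjTranspose_mul_self B).1
  refine exists_unitary_eq_mul_diagonal_of_conjTranspose_mul_self _ _ ?_
  rw [conjTranspose_mul, mul_assoc, ← mul_assoc Bᴴ, ← mul_assoc, ← star_eq_conjTranspose,
    H.star_eigenvectorUnitary_mul_mul_eigenvectorUnitary]
  congr 1
  funext i
  simp [Real.sq_sqrt ((posSemidef_conjTranspose_mul_self B).eigenvalues_nonneg i)]

end Matrix

lemma traceNorm_eq_sum_sqrt_eigenvalues {n : ℕ} (B : Matrix (Fin n) (Fin n) ℂ) :
    traceNorm B = ∑ i, √((posSemidef_conjTranspose_mul_self B).1.eigenvalues i) := by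
  rw [traceNorm, trace_mul_cycle, Unitary.coe_star_mul_self, one_mul, trace_diagonal,
    Complex.re_sum]
  simp

theorem norm_eq_traceNorm_of_rank_le_general {n k : ℕ} (hn : 0 < n) (hk : k ≤ n)
    (N : Matrix (Fin n) (Fin n) ℂ → ℝ)
    (htri : ∀ B C, N (B + C) ≤ N B + N C)
    (hsmul : ∀ (c : ℂ) B, N (c • B) = ‖c‖ * N B)
    (hinv : ∀ U V B, U ∈ Matrix.unitaryGroup (Fin n) ℂ →
      V ∈ Matrix.unitaryGroup (Fin n) ℂ → N (U * B * V) = N B)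
    (hE : N (Matrix.single ⟨0, hn⟩ ⟨0, hn⟩ 1) = 1)
    (hPk : N (partialId n k) = k) :
    ∀ B : Matrix (Fin n) (Fin n) ℂ, B.rank ≤ k → N B = traceNorm B := by
  intro B hB
  let p : Seminorm ℂ (Matrix (Fin n) (Fin n) ℂ) := Seminorm.of N htri hsmul
  have hperm : ∀ (τ : Equiv.Perm (Fin n)) d, p (diagonal (d ∘ τ)) = p (diagonal d) := fun τ d => by
    rw [← permMatrix_mul_diagonal_mul_permMatrix_inv]
    exact hinv _ _ _ (permMatrix_mem_unitaryGroup τ) (permMatrix_mem_unitaryGroup τ⁻¹)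
  have hsingle : ∀ i, p (single i i 1) = 1 := fun i =>
    (p.apply_single_one_eq_of_perm hperm i ⟨0, hn⟩).trans hE
  set H := (posSemidef_conjTranspose_mul_self B).1
  set W : Matrix (Fin n) (Fin n) ℂ := ↑H.eigenvectorUnitary
  set σ := fun i => √(H.eigenvalues i)
  obtain ⟨U, hU, hBW⟩ := exists_unitary_mul_eigenvectorUnitary_eq_mul_diagonal B
  have hD : diagonal (fun i => (σ i : ℂ)) = star U * B * W := by
    rw [mul_assoc, hBW, ← mul_assoc, Unitary.star_mul_self_of_mem hU, one_mul]
  have hNB : N B = p (diagonal fun i => (σ i : ℂ)) := by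
    rw [hD]
    exact (hinv _ _ _ (Unitary.star_mem hU) H.eigenvectorUnitary.2).symm
  have hrank : Fintype.card {i // (σ i : ℂ) ≠ 0} ≤ k := by
    rw [← rank_diagonal, hD]
    exact (rank_mul_le_left _ _).trans ((rank_mul_le_right _ _).trans hB)
  rw [hNB, traceNorm_eq_sum_sqrt_eigenvalues]
  exact p.apply_diagonal_ofReal_eq_sum hperm hsingle hk hPk σ (fun i => Real.sqrt_nonneg _) hrank

/-- If a unitarily invariant norm on `M_n(ℂ)` satisfies `‖E₁₁‖ = 1` and
`‖E₁₁ + ⋯ + E_kk‖ = k`, then it agrees with the trace norm on all matrices of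
rank at most `k`. -/
theorem norm_eq_traceNorm_of_rank_le {n k : ℕ} (hn : 0 < n) (hk : k ≤ n)
    (N : Matrix (Fin n) (Fin n) ℂ → ℝ)
    (hpos : ∀ B, 0 ≤ N B) (hzero : ∀ B, N B = 0 → B = 0)
    (htri : ∀ B C, N (B + C) ≤ N B + N C)
    (hsmul : ∀ (c : ℂ) B, N (c • B) = ‖c‖ * N B)
    (hinv : ∀ U V B, U ∈ Matrix.unitaryGroup (Fin n) ℂ →
      V ∈ Matrix.unitaryGroup (Fin n) ℂ → N (U * B * V) = N B)
    (hE : N (Matrix.single ⟨0, hn⟩ ⟨0, hn⟩ 1) = 1)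
    (hPk : N (partialId n k) = k) :
    ∀ B : Matrix (Fin n) (Fin n) ℂ, B.rank ≤ k → N B = traceNorm B :=
  norm_eq_traceNorm_of_rank_le_general hn hk N htri hsmul hinv hE hPk
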